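/- arXiv:2401.12321 — 3 statements merged into one kernel-verified Lean document; each statement's English description precedes it below -/
import Mathlib

section
/- Let O₁ : H → H be γ₁-averaged and O₂ : H → H be γ₂-averaged with γ₁, γ₂ ∈ (0,1). Then the composition O₂ ∘ O₁ is γ-averaged with γ = 1/(1 + 1/(γ₁/(1−γ₁) + γ₂/(1−γ₂))) = (γ₁ + γ₂ − 2γ₁γ₂)/(1 − γ₁γ₂). -/
/-- `O` is `γ`-averaged: `O = (1-γ)•Id + γ•N` with `N` nonexpansive. -/
def IsAveraged {H : Type*} [NormedAddCommGroup H] [InnerProductSpace ℝ H]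
    (γ : ℝ) (O : H → H) : Prop :=
  ∃ N : H → H, LipschitzWith 1 N ∧ ∀ x, O x = (1 - γ) • x + γ • N x

/-! Write `O = (1-γ)•Id + γ•N` and `r = Id - O` for the residual. In a Hilbert space,
`‖O x - O y‖² + (1-γ)/γ ‖r x - r y‖² = (1-γ)‖x - y‖² + γ‖N x - N y‖²`, so `O` is `γ`-averaged
exactly when `‖O x - O y‖² + (1-γ)/γ ‖r x - r y‖² ≤ ‖x - y‖²`. For a composition the residual is
the sum of the two residuals, and `l‖a‖² + m‖b‖² ≥ lm/(l+m) ‖a + b‖²`, so the two inequalities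
chain with the constant `lm/(l+m)`; this is the constant `(1-γ)/γ` of the stated `γ`. -/

def NonexpansiveWithResidual {H : Type*} [SeminormedAddCommGroup H] (c : ℝ) (O : H → H) :
    Prop :=
  ∀ x y, ‖O x - O y‖ ^ 2 + c * ‖(x - O x) - (y - O y)‖ ^ 2 ≤ ‖x - y‖ ^ 2

section Hilbert

variable {H : Type*} [NormedAddCommGroup H] [InnerProductSpace ℝ H]

lemma norm_sq_add_residual_eq {γ : ℝ} (hγ : γ ≠ 0) (u v : H) :
    ‖(1 - γ) • u + γ • v‖ ^ 2 + (1 - γ) / γ * ‖u - ((1 - γ) • u + γ • v)‖ ^ 2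
      = (1 - γ) * ‖u‖ ^ 2 + γ * ‖v‖ ^ 2 := by
  simp only [← real_inner_self_eq_norm_sq, inner_add_left, inner_add_right, inner_sub_left,
    inner_sub_right, real_inner_smul_left, real_inner_smul_right, real_inner_comm u v]
  field_simp
  ring

lemma nonexpansiveWithResidual_iff_lipschitzWith {γ : ℝ} (hγ : 0 < γ) {O N : H → H}
    (hO : ∀ x, O x = (1 - γ) • x + γ • N x) :
    NonexpansiveWithResidual ((1 - γ) / γ) O ↔ LipschitzWith 1 N := by
  have key : ∀ x y, ‖O x - O y‖ ^ 2 + (1 - γ) / γ * ‖(x - O x) - (y - O y)‖ ^ 2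
      = (1 - γ) * ‖x - y‖ ^ 2 + γ * ‖N x - N y‖ ^ 2 := fun x y => by
    have hdiff : O x - O y = (1 - γ) • (x - y) + γ • (N x - N y) := by
      rw [hO x, hO y, smul_sub, smul_sub]; abel
    rw [← norm_sq_add_residual_eq hγ.ne', ← hdiff, sub_sub_sub_comm]
  simp only [NonexpansiveWithResidual, key, lipschitzWith_iff_norm_sub_le, NNReal.coe_one,
    one_mul]
  refine forall₂_congr fun x y => ?_
  rw [← sq_le_sq₀ (norm_nonneg _) (norm_nonneg _)]
  constructor <;> intro h <;> nlinarith

lemma isAveraged_iff_nonexpansiveWithResidual {γ : ℝ} (hγ : 0 < γ) {O : H → H} :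
    IsAveraged γ O ↔ NonexpansiveWithResidual ((1 - γ) / γ) O := by
  constructor
  · rintro ⟨N, hN, hO⟩
    exact (nonexpansiveWithResidual_iff_lipschitzWith hγ hO).2 hN
  · intro h
    have hO : ∀ x, O x = (1 - γ) • x + γ • (γ⁻¹ • (O x - (1 - γ) • x)) := fun x => by
      rw [smul_inv_smul₀ hγ.ne', add_sub_cancel]
    exact ⟨_, (nonexpansiveWithResidual_iff_lipschitzWith hγ hO).1 h, hO⟩

end Hilbert

lemma harmonic_mul_norm_add_sq_le {E : Type*} [SeminormedAddCommGroup E] {l m : ℝ}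
    (hl : 0 < l) (hm : 0 < m) (a b : E) :
    l * m / (l + m) * ‖a + b‖ ^ 2 ≤ l * ‖a‖ ^ 2 + m * ‖b‖ ^ 2 := by
  have hab : ‖a + b‖ ^ 2 ≤ (‖a‖ + ‖b‖) ^ 2 := by gcongr; exact norm_add_le a b
  rw [div_mul_eq_mul_div, div_le_iff₀ (by positivity)]
  nlinarith [sq_nonneg (l * ‖a‖ - m * ‖b‖), mul_pos hl hm]

lemma NonexpansiveWithResidual.comp {E : Type*} [SeminormedAddCommGroup E] {l m : ℝ}
    {O₁ O₂ : E → E} (hl : 0 < l) (hm : 0 < m)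
    (h₁ : NonexpansiveWithResidual l O₁) (h₂ : NonexpansiveWithResidual m O₂) :
    NonexpansiveWithResidual (l * m / (l + m)) (O₂ ∘ O₁) := by
  intro x y
  have hres : (x - O₂ (O₁ x)) - (y - O₂ (O₁ y))
      = ((x - O₁ x) - (y - O₁ y)) + ((O₁ x - O₂ (O₁ x)) - (O₁ y - O₂ (O₁ y))) := by abel
  have hharm := harmonic_mul_norm_add_sq_le hl hm
    ((x - O₁ x) - (y - O₁ y)) ((O₁ x - O₂ (O₁ x)) - (O₁ y - O₂ (O₁ y)))
  simp only [Function.comp_apply, hres]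
  linarith [h₁ x y, h₂ (O₁ x) (O₁ y), hharm]

lemma one_sub_div_composition_const {γ₁ γ₂ : ℝ} (hγ₁ : γ₁ ∈ Set.Ioo (0 : ℝ) 1)
    (hγ₂ : γ₂ ∈ Set.Ioo (0 : ℝ) 1) :
    let γ := (γ₁ + γ₂ - 2 * γ₁ * γ₂) / (1 - γ₁ * γ₂)
    0 < γ ∧ (1 - γ) / γ
      = (1 - γ₁) / γ₁ * ((1 - γ₂) / γ₂) / ((1 - γ₁) / γ₁ + (1 - γ₂) / γ₂) := by
  obtain ⟨h₁0, h₁1⟩ := hγ₁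
  obtain ⟨h₂0, h₂1⟩ := hγ₂
  have hnum : 0 < γ₁ + γ₂ - 2 * γ₁ * γ₂ := by nlinarith
  have hden : 0 < 1 - γ₁ * γ₂ := by nlinarith
  refine ⟨div_pos hnum hden, ?_⟩
  have hsum : (1 - γ₁) / γ₁ + (1 - γ₂) / γ₂ = (γ₁ + γ₂ - 2 * γ₁ * γ₂) / (γ₁ * γ₂) := by
    field_simp; ring
  rw [hsum]
  field_simp
  ring

theorem composition_averaged
    {H : Type*} [NormedAddCommGroup H] [InnerProductSpace ℝ H]
    (O₁ O₂ : H → H) (γ₁ γ₂ : ℝ)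
    (hγ₁ : γ₁ ∈ Set.Ioo (0 : ℝ) 1) (hγ₂ : γ₂ ∈ Set.Ioo (0 : ℝ) 1)
    (h₁ : IsAveraged γ₁ O₁) (h₂ : IsAveraged γ₂ O₂) :
    IsAveraged ((γ₁ + γ₂ - 2 * γ₁ * γ₂) / (1 - γ₁ * γ₂)) (O₂ ∘ O₁) := by
  obtain ⟨hγ, hratio⟩ := one_sub_div_composition_const hγ₁ hγ₂
  rw [isAveraged_iff_nonexpansiveWithResidual hγ₁.1] at h₁
  rw [isAveraged_iff_nonexpansiveWithResidual hγ₂.1] at h₂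
  rw [isAveraged_iff_nonexpansiveWithResidual hγ, hratio]
  exact h₁.comp (div_pos (sub_pos.2 hγ₁.2) hγ₁.1) (div_pos (sub_pos.2 hγ₂.2) hγ₂.1) h₂
end

section
/- Let H be a real Hilbert space, γ ∈ (0,1], and O : H → H a γ-averaged operator with Fix(O) ≠ ∅. Let (γ_t) be a sequence in [0, 1/γ] with Σ_{t≥1} γ_t(1 − γ·γ_t) = +∞. Define x_{t+1} = x_t + γ_t(O(x_t) − x_t) from any x₀ ∈ H. Then ‖O(x_t) − x_t‖ → 0 as t → ∞. -/
open Filter Topology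

theorem norm_one_sub_smul_add_smul_sq {H : Type*} [NormedAddCommGroup H]
    [InnerProductSpace ℝ H] (a b : H) (l : ℝ) :
    ‖(1 - l) • a + l • b‖ ^ 2
      = (1 - l) * ‖a‖ ^ 2 + l * ‖b‖ ^ 2 - l * (1 - l) * ‖a - b‖ ^ 2 := by
  rw [norm_add_sq_real, norm_sub_sq_real]
  simp only [norm_smul, real_inner_smul_left, real_inner_smul_right, Real.norm_eq_abs,
    mul_pow, sq_abs]
  ring

theorem summable_of_le_sub_succ {f d : ℕ → ℝ} (hf : ∀ t, 0 ≤ f t) (hd : ∀ t, 0 ≤ d t)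
    (hfd : ∀ t, f t ≤ d t - d (t + 1)) : Summable f := by
  refine summable_of_sum_range_le hf (c := d 0) fun n => ?_
  calc ∑ t ∈ Finset.range n, f t
      ≤ ∑ t ∈ Finset.range n, (d t - d (t + 1)) := Finset.sum_le_sum fun t _ => hfd t
    _ = d 0 - d n := Finset.sum_range_sub' d n
    _ ≤ d 0 := sub_le_self _ (hd n)

theorem tendsto_zero_of_antitone_of_summable_mul {a s : ℕ → ℝ} (hs : Antitone s)
    (hs0 : ∀ t, 0 ≤ s t) (ha : ∀ t, 0 ≤ a t) (hsum : Summable fun t => a t * s t)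
    (hdiv : ¬ Summable a) : Tendsto s atTop (𝓝 0) := by
  have hbdd : BddBelow (Set.range s) := ⟨0, Set.forall_mem_range.2 hs0⟩
  obtain hL | hL := (le_ciInf hs0 : 0 ≤ ⨅ t, s t).eq_or_lt
  · exact hL ▸ tendsto_atTop_ciInf hs hbdd
  · refine absurd (Summable.of_nonneg_of_le ha (fun t => ?_) (hsum.div_const (⨅ t, s t))) hdiv
    rw [le_div_iff₀ hL]
    exact mul_le_mul_of_nonneg_left (ciInf_le hbdd t) (ha t)

section KrasnoselskiiMann

variable {H : Type*} [NormedAddCommGroup H] [InnerProductSpace ℝ H] {N : H → H}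

theorem norm_one_sub_smul_add_smul_sub_sq_le (hN : LipschitzWith 1 N) {z : H} (hz : N z = z)
    {l : ℝ} (hl0 : 0 ≤ l) (y : H) :
    ‖(1 - l) • y + l • N y - z‖ ^ 2 ≤ ‖y - z‖ ^ 2 - l * (1 - l) * ‖N y - y‖ ^ 2 := by
  have hNy : ‖N y - z‖ ≤ ‖y - z‖ := by simpa [hz, dist_eq_norm] using hN.dist_le_mul y z
  have hsplit : (1 - l) • y + l • N y - z = (1 - l) • (y - z) + l • (N y - z) := by module
  rw [hsplit, norm_one_sub_smul_add_smul_sq, sub_sub_sub_cancel_right, norm_sub_rev y (N y)]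
  have := mul_le_mul_of_nonneg_left (pow_le_pow_left₀ (norm_nonneg _) hNy 2) hl0
  linarith

theorem norm_apply_sub_le_of_one_sub_smul_add_smul (hN : LipschitzWith 1 N) {l : ℝ}
    (hl0 : 0 ≤ l) (hl1 : l ≤ 1) (y : H) :
    ‖N ((1 - l) • y + l • N y) - ((1 - l) • y + l • N y)‖ ≤ ‖N y - y‖ := by
  set y' := (1 - l) • y + l • N y with hy'
  have hstep : ‖N y' - N y‖ ≤ l * ‖N y - y‖ :=
    calc ‖N y' - N y‖ ≤ ‖y' - y‖ := by simpa [dist_eq_norm] using hN.dist_le_mul y' y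
      _ = l * ‖N y - y‖ := by
        rw [show y' - y = l • (N y - y) by rw [hy']; module, norm_smul, Real.norm_of_nonneg hl0]
  calc ‖N y' - y'‖ = ‖(N y' - N y) + (1 - l) • (N y - y)‖ := by rw [hy']; congr 1; module
    _ ≤ ‖N y' - N y‖ + (1 - l) * ‖N y - y‖ := (norm_add_le _ _).trans_eq
        (by rw [norm_smul, Real.norm_of_nonneg (sub_nonneg.2 hl1)])
    _ ≤ ‖N y - y‖ := by linarith

theorem tendsto_norm_apply_sub_of_krasnoselskiiMann (hN : LipschitzWith 1 N)
    (hfix : ∃ z, N z = z) {l : ℕ → ℝ} (hl : ∀ t, l t ∈ Set.Icc (0 : ℝ) 1)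
    (hdiv : ¬ Summable fun t => l t * (1 - l t)) {x : ℕ → H}
    (hx : ∀ t, x (t + 1) = (1 - l t) • x t + l t • N (x t)) :
    Tendsto (fun t => ‖N (x t) - x t‖) atTop (𝓝 0) := by
  obtain ⟨z, hz⟩ := hfix
  have hweight : ∀ t, 0 ≤ l t * (1 - l t) := fun t =>
    mul_nonneg (hl t).1 (sub_nonneg.2 (hl t).2)
  have hsum : Summable fun t => l t * (1 - l t) * ‖N (x t) - x t‖ ^ 2 :=
    summable_of_le_sub_succ (fun t => mul_nonneg (hweight t) (sq_nonneg _))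
      (fun t => sq_nonneg ‖x t - z‖) fun t => by
        have := norm_one_sub_smul_add_smul_sub_sq_le hN hz (hl t).1 (x t)
        rw [← hx t] at this
        linarith
  have hanti : Antitone fun t => ‖N (x t) - x t‖ := antitone_nat_of_succ_le fun t => by
    simpa only [hx t] using norm_apply_sub_le_of_one_sub_smul_add_smul hN (hl t).1 (hl t).2 (x t)
  have hsq : Tendsto (fun t => ‖N (x t) - x t‖ ^ 2) atTop (𝓝 0) :=
    tendsto_zero_of_antitone_of_summable_mul
      (fun _ _ h => pow_le_pow_left₀ (norm_nonneg _) (hanti h) 2) (fun _ => sq_nonneg _)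
      hweight hsum hdiv
  simpa [Real.sqrt_sq (norm_nonneg _)] using hsq.sqrt

end KrasnoselskiiMann

theorem krasnoselskii_mann_residual_tendsto_zero_general
    {H : Type*} [NormedAddCommGroup H] [InnerProductSpace ℝ H]
    (γ : ℝ) (hγ0 : 0 < γ)
    (O : H → H) (hO : IsAveraged γ O)
    (hfix : ∃ z : H, O z = z)
    (γt : ℕ → ℝ) (hγt : ∀ t, γt t ∈ Set.Icc (0 : ℝ) (1 / γ))
    (hdiv : ¬ Summable (fun t => γt t * (1 - γ * γt t)))
    (x : ℕ → H)
    (hrec : ∀ t, x (t + 1) = x t + γt t • (O (x t) - x t)) :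
    Filter.Tendsto (fun t => ‖O (x t) - x t‖) Filter.atTop (nhds 0) := by
  obtain ⟨N, hN, hON⟩ := hO
  have hres : ∀ y, O y - y = γ • (N y - y) := fun y => by rw [hON]; module
  have hfixN : ∃ z, N z = z := by
    obtain ⟨z, hz⟩ := hfix
    refine ⟨z, sub_eq_zero.1 ((smul_eq_zero.1 ?_).resolve_left hγ0.ne')⟩
    rw [← hres, hz, sub_self]
  have hl : ∀ t, γ * γt t ∈ Set.Icc (0 : ℝ) 1 := fun t =>
    ⟨mul_nonneg hγ0.le (hγt t).1, by
      simpa [hγ0.ne'] using mul_le_mul_of_nonneg_left (hγt t).2 hγ0.le⟩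
  have hdivN : ¬ Summable fun t => γ * γt t * (1 - γ * γt t) := by
    simp_rw [mul_assoc]
    rwa [summable_mul_left_iff hγ0.ne']
  have hxN : ∀ t, x (t + 1) = (1 - γ * γt t) • x t + (γ * γt t) • N (x t) := fun t => by
    rw [hrec, hON]; module
  have hN0 := tendsto_norm_apply_sub_of_krasnoselskiiMann hN hfixN hl hdivN hxN
  simpa [hres, norm_smul, abs_of_pos hγ0] using hN0.const_mul γ

theorem krasnoselskii_mann_residual_tendsto_zero
    {H : Type*} [NormedAddCommGroup H] [InnerProductSpace ℝ H] [CompleteSpace H]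
    (γ : ℝ) (hγ0 : 0 < γ) (hγ1 : γ ≤ 1)
    (O : H → H) (hO : IsAveraged γ O)
    (hfix : ∃ z : H, O z = z)
    (γt : ℕ → ℝ) (hγt : ∀ t, γt t ∈ Set.Icc (0 : ℝ) (1 / γ))
    (hdiv : ¬ Summable (fun t => γt t * (1 - γ * γt t)))
    (x : ℕ → H)
    (hrec : ∀ t, x (t + 1) = x t + γt t • (O (x t) - x t)) :
    Filter.Tendsto (fun t => ‖O (x t) - x t‖) Filter.atTop (nhds 0) :=
  krasnoselskii_mann_residual_tendsto_zero_general γ hγ0 O hO hfix γt hγt hdiv x hrec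
end

section
/- The softsign function r(x) = x/(1+|x|) equals the proximal operator of f, i.e., r(x) = argmin_y ( f(y) + (1/2)(x − y)² ), where f(y) = −|y| − log(1 − |y|) − y²/2 for |y| < 1 and f(y) = +∞ for |y| ≥ 1. -/
/-!
On `|y| < 1` the prox objective is `x² / 2 - x y - |y| - log (1 - |y|)`. With `a = 1 + |x|` its
excess over the value at `x / a` splits as `(|x| |y| - x y) + (v - log v - 1)` for
`v = a (1 - |y|)`. Both terms are nonnegative, the second by `log v ≤ v - 1`; they vanish only when
`x` and `y` have the same sign and `v = 1`, i.e. `|y| = |x| / a`, which forces `y = x / a`.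
-/

/-- The convex potential of the softsign activation, with value `⊤` outside `(-1,1)`. -/
noncomputable def softsignPotential (y : ℝ) : EReal :=
  if |y| < 1 then ((-|y| - Real.log (1 - |y|) - y ^ 2 / 2 : ℝ) : EReal) else ⊤

open Real

noncomputable def softsignProxObjective (x y : ℝ) : ℝ :=
  (-|y| - log (1 - |y|) - y ^ 2 / 2) + 1 / 2 * (x - y) ^ 2

lemma abs_div_one_add_abs (x : ℝ) : |x / (1 + |x|)| = |x| / (1 + |x|) := by
  rw [abs_div, abs_of_pos (by positivity : (0 : ℝ) < 1 + |x|)]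

lemma abs_div_one_add_abs_lt_one (x : ℝ) : |x / (1 + |x|)| < 1 := by
  rw [abs_div_one_add_abs, div_lt_one (by positivity)]
  linarith

lemma softsignPotential_add_of_abs_lt {x y : ℝ} (hy : |y| < 1) :
    softsignPotential y + ((1 / 2 * (x - y) ^ 2 : ℝ) : EReal) = softsignProxObjective x y := by
  rw [softsignPotential, if_pos hy, ← EReal.coe_add, softsignProxObjective]

lemma softsignPotential_add_of_one_le_abs {x y : ℝ} (hy : 1 ≤ |y|) :
    softsignPotential y + ((1 / 2 * (x - y) ^ 2 : ℝ) : EReal) = ⊤ := by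
  rw [softsignPotential, if_neg hy.not_gt, EReal.top_add_coe]

lemma softsignProxObjective_sub_softsign {x y : ℝ} (hy : |y| < 1) :
    softsignProxObjective x y - softsignProxObjective x (x / (1 + |x|)) =
      (|x| * |y| - x * y) +
        ((1 + |x|) * (1 - |y|) - log ((1 + |x|) * (1 - |y|)) - 1) := by
  have ha : (0 : ℝ) < 1 + |x| := by positivity
  have hu : (0 : ℝ) < 1 - |y| := by linarith
  have h_one_sub : 1 - |x| / (1 + |x|) = (1 + |x|)⁻¹ := by field_simp; ring
  rw [softsignProxObjective, softsignProxObjective, abs_div_one_add_abs, h_one_sub, log_inv,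
    log_mul ha.ne' hu.ne']
  field_simp
  linear_combination (-2 * (1 + |x|)) * sq_abs x

lemma sub_log_sub_one_nonneg {v : ℝ} (hv : 0 < v) : 0 ≤ v - log v - 1 := by
  linarith [log_le_sub_one_of_pos hv]

lemma eq_one_of_sub_log_sub_one_eq_zero {v : ℝ} (hv : 0 < v) (h : v - log v - 1 = 0) : v = 1 := by
  by_contra hv1
  linarith [log_lt_sub_one_of_pos hv hv1]

lemma softsignProxObjective_softsign_le {x y : ℝ} (hy : |y| < 1) :
    softsignProxObjective x (x / (1 + |x|)) ≤ softsignProxObjective x y := by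
  have hv : 0 < (1 + |x|) * (1 - |y|) := mul_pos (by positivity) (by linarith)
  have hxy : x * y ≤ |x| * |y| := abs_mul x y ▸ le_abs_self (x * y)
  linarith [softsignProxObjective_sub_softsign (x := x) hy, sub_log_sub_one_nonneg hv]

lemma eq_softsign_of_softsignProxObjective_le {x y : ℝ} (hy : |y| < 1)
    (h : softsignProxObjective x y ≤ softsignProxObjective x (x / (1 + |x|))) :
    y = x / (1 + |x|) := by
  have ha : (0 : ℝ) < 1 + |x| := by positivity
  have hv : 0 < (1 + |x|) * (1 - |y|) := mul_pos ha (by linarith)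
  have hxy : x * y ≤ |x| * |y| := abs_mul x y ▸ le_abs_self (x * y)
  have hgap := softsignProxObjective_sub_softsign (x := x) hy
  have hlog := sub_log_sub_one_nonneg hv
  have h_sign : x * y = |x| * |y| := by linarith
  have h_abs : |y| = |x| / (1 + |x|) := by
    have hv_one := eq_one_of_sub_log_sub_one_eq_zero hv (by linarith)
    field_simp
    linarith
  have h_mul : x * (y - x / (1 + |x|)) = 0 := by
    rw [mul_sub, h_sign, h_abs, mul_div_assoc', mul_div_assoc', abs_mul_abs_self, sub_self]
  rcases mul_eq_zero.1 h_mul with hx | h_diff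
  · simpa [hx] using h_abs
  · exact sub_eq_zero.1 h_diff

theorem softsign_is_prox (x : ℝ) :
    (∀ y : ℝ,
      softsignPotential (x / (1 + |x|))
          + (((1 / 2) * (x - x / (1 + |x|)) ^ 2 : ℝ) : EReal)
        ≤ softsignPotential y + (((1 / 2) * (x - y) ^ 2 : ℝ) : EReal)) ∧
    (∀ y : ℝ,
      softsignPotential y + (((1 / 2) * (x - y) ^ 2 : ℝ) : EReal)
          = softsignPotential (x / (1 + |x|))
              + (((1 / 2) * (x - x / (1 + |x|)) ^ 2 : ℝ) : EReal)
        → y = x / (1 + |x|)) := by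
  rw [softsignPotential_add_of_abs_lt (abs_div_one_add_abs_lt_one x)]
  refine ⟨fun y => ?_, fun y hmin => ?_⟩
  · rcases lt_or_ge |y| 1 with hy | hy
    · rw [softsignPotential_add_of_abs_lt hy, EReal.coe_le_coe_iff]
      exact softsignProxObjective_softsign_le hy
    · rw [softsignPotential_add_of_one_le_abs hy]
      exact le_top
  · rcases lt_or_ge |y| 1 with hy | hy
    · rw [softsignPotential_add_of_abs_lt hy, EReal.coe_eq_coe_iff] at hmin
      exact eq_softsign_of_softsignProxObjective_le hy hmin.le
    · rw [softsignPotential_add_of_one_le_abs hy] at hmin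
      exact absurd hmin.symm (EReal.coe_ne_top _)
end
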